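/- Let m ∈ ℕ and let T be a finite tournament with i(T) > m such that i(T − x) ≤ m for every vertex x of T (i.e. T is a bound of the class of finite tournaments of index at most m). Then T is acyclically indecomposable: T has no acyclic interval with more than one element. -/

import Mathlib

/-- A tournament on a vertex set `V`: a loopless directed graph such that for all
distinct `x, y` exactly one of `(x,y)`, `(y,x)` is an arc. -/
structure Tournament (V : Type*) where
  rel : V → V → Prop
  irrefl : ∀ x, ¬ rel x x
  total : ∀ x y, x ≠ y → rel x y ∨ rel y x
  asymm : ∀ x y, rel x y → ¬ rel y x

namespace Tournament

variable {V : Type*} {W : Type*}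

/-- The tournament obtained from `T` by reversing all arcs both of whose
endpoints lie in `X`. -/
def inv (T : Tournament V) (X : Set V) : Tournament V where
  rel x y := (x ∈ X ∧ y ∈ X ∧ T.rel y x) ∨ ((x ∉ X ∨ y ∉ X) ∧ T.rel x y)
  irrefl x := by have := T.irrefl x; tauto
  total x y hxy := by
    have := T.total x y hxy
    by_cases hx : x ∈ X <;> by_cases hy : y ∈ X <;> tauto
  asymm x y := by have h1 := T.asymm x y; have h2 := T.asymm y x; tauto

/-- Successive inversions along a finite sequence of subsets (`X_0` first). -/
def invSeq (T : Tournament V) (Xs : List (Set V)) : Tournament V :=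
  Xs.foldl Tournament.inv T

/-- A tournament is acyclic (transitive) when its arc relation is transitive,
i.e. a strict linear order. -/
def IsAcyclic (T : Tournament V) : Prop :=
  ∀ x y z, T.rel x y → T.rel y z → T.rel x z

/-- The inversion index: the least number of subsets to be inverted to reach an
acyclic tournament. -/
noncomputable def index (T : Tournament V) : ℕ :=
  sInf {m | ∃ Xs : List (Set V), Xs.length = m ∧ (T.invSeq Xs).IsAcyclic}

/-- Induced subtournament on a set of vertices. -/
def restrict (T : Tournament V) (A : Set V) : Tournament A where
  rel x y := T.rel x y
  irrefl x := T.irrefl x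
  total x y hxy := T.total x y (fun h => hxy (Subtype.ext h))
  asymm x y := T.asymm x y

/-- `T − x`: the subtournament induced on `V ∖ {x}`. -/
def erase (T : Tournament V) (x : V) : Tournament {y : V // y ≠ x} :=
  T.restrict {y | y ≠ x}

/-- `S` embeds into `T`: `S` is isomorphic to the subtournament of `T` induced on
some subset of the vertices of `T`. -/
def Embeds (S : Tournament V) (T : Tournament W) : Prop :=
  ∃ f : V → W, Function.Injective f ∧ ∀ x y, S.rel x y ↔ T.rel (f x) (f y)

/-- Isomorphism of tournaments. -/
def Iso (S : Tournament V) (T : Tournament W) : Prop :=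
  ∃ e : V ≃ W, ∀ x y, S.rel x y ↔ T.rel (e x) (e y)

/-- The dual tournament, obtained by reversing all arcs. -/
def dual (T : Tournament V) : Tournament V where
  rel x y := T.rel y x
  irrefl x := T.irrefl x
  total x y hxy := (T.total x y hxy).symm
  asymm x y h := T.asymm y x h

/-- `X` is an interval of `T`. -/
def IsInterval (T : Tournament V) (X : Set V) : Prop :=
  ∀ y ∉ X, (∀ x ∈ X, T.rel x y) ∨ (∀ x ∈ X, T.rel y x)

/-- A tournament is indecomposable when all its intervals are trivial. -/
def Indecomposable (T : Tournament V) : Prop :=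
  ∀ X : Set V, T.IsInterval X → X = ∅ ∨ X = Set.univ ∨ ∃ x, X = {x}

end Tournament

/-- The transitive tournament `n̲` on `{0, …, n−1}`, with arcs `(i,j)` for `i < j`. -/
def linear (n : ℕ) : Tournament (Fin n) where
  rel x y := x < y
  irrefl x := lt_irrefl x
  total _ _ h := lt_or_gt_of_ne h
  asymm _ _ h := lt_asymm h

/-- `2ℕ_{<k} = {0, 2, …, 2(k−1)}` as a subset of `Fin N`. -/
def evensLT {N : ℕ} (k : ℕ) : Set (Fin N) := {i | (i : ℕ) % 2 = 0 ∧ (i : ℕ) < 2 * k}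

/-- `2ℕ_{<k}+1 = {1, 3, …, 2k−1}` as a subset of `Fin N`. -/
def oddsLT {N : ℕ} (k : ℕ) : Set (Fin N) := {i | (i : ℕ) % 2 = 1 ∧ (i : ℕ) < 2 * k}


/-!
Let `X` be an acyclic interval with at least two elements, let `x` be its top vertex and `y`
the top vertex of `X ∖ {x}`. Then `{x, y}` is an interval of `T`, i.e. `x` is a twin of `y`.
Any inversion sequence making `T − x` acyclic lifts to one of the same length for `T`, letting
`x` belong to exactly those sets that contain `y`: the lifted sets keep `{x, y}` an interval, and
a tournament in which `x` is a twin of `y` is acyclic as soon as `T − x` is. Hence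
`i(T) ≤ i(T − x) ≤ m`. The finiteness of `V` guarantees that `i(T − x)` is attained at all:
inverting two-element sets one arc at a time turns any tournament into any other.
-/

namespace Tournament

variable {V : Type*}

theorem ext {T T' : Tournament V} (h : ∀ a b, T.rel a b ↔ T'.rel a b) : T = T' := by
  cases T; cases T'
  congr
  funext a b
  exact propext (h a b)

theorem rel_inv {T : Tournament V} {S : Set V} {a b : V} :
    (T.inv S).rel a b ↔ (a ∈ S ∧ b ∈ S ∧ T.rel b a) ∨ ((a ∉ S ∨ b ∉ S) ∧ T.rel a b) :=
  Iff.rfl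

@[simp]
theorem invSeq_cons (T : Tournament V) (S : Set V) (Xs : List (Set V)) :
    T.invSeq (S :: Xs) = (T.inv S).invSeq Xs := rfl

theorem invSeq_append_singleton (T : Tournament V) (Xs : List (Set V)) (S : Set V) :
    T.invSeq (Xs ++ [S]) = (T.invSeq Xs).inv S := by
  simp [invSeq]

theorem restrict_inv (T : Tournament V) (A S : Set V) :
    (T.inv S).restrict A = (T.restrict A).inv (Subtype.val ⁻¹' S) := rfl

theorem restrict_invSeq (T : Tournament V) (A : Set V) (Xs : List (Set V)) :
    (T.invSeq Xs).restrict A = (T.restrict A).invSeq (Xs.map (Subtype.val ⁻¹' ·)) := by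
  induction Xs generalizing T with
  | nil => rfl
  | cons S Xs ih => simp only [invSeq_cons, List.map_cons, ih, restrict_inv]

theorem erase_invSeq (T : Tournament V) (x : V) (Xs : List (Set V)) :
    (T.invSeq Xs).erase x = (T.erase x).invSeq (Xs.map (Subtype.val ⁻¹' ·)) :=
  restrict_invSeq T _ Xs

theorem rel_inv_sym2 [DecidableEq V] (T : Tournament V) (e : Sym2 V) (a b : V) :
    (T.inv {v | v ∈ e}).rel a b ↔ if s(a, b) = e then T.rel b a else T.rel a b := by
  rcases eq_or_ne a b with rfl | hab
  · simp [rel_inv, T.irrefl]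
  · have hmem : a ∈ e ∧ b ∈ e ↔ s(a, b) = e := (Sym2.mem_and_mem_iff hab).trans eq_comm
    rw [rel_inv, ← and_assoc, ← not_and_or]
    simp only [Set.mem_ofPred_eq, hmem]
    split_ifs with h
    · simp [h]
    · simp [h]

theorem exists_invSeq_rel_eq_ite [DecidableEq V] (T : Tournament V) (F : Finset (Sym2 V)) :
    ∃ Xs : List (Set V), ∀ a b,
      (T.invSeq Xs).rel a b ↔ if s(a, b) ∈ F then T.rel b a else T.rel a b := by
  induction F using Finset.induction_on with
  | empty => exact ⟨[], fun a b => by simp [invSeq]⟩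
  | @insert e F he ih =>
    obtain ⟨Xs, hXs⟩ := ih
    refine ⟨Xs ++ [{v | v ∈ e}], fun a b => ?_⟩
    rw [invSeq_append_singleton, rel_inv_sym2, hXs, hXs, Sym2.eq_swap (a := b)]
    by_cases hab : s(a, b) = e
    · simp [hab, he]
    · simp [hab]

theorem exists_invSeq_eq [Finite V] (T T' : Tournament V) :
    ∃ Xs : List (Set V), T.invSeq Xs = T' := by
  classical
  let D : Set (Sym2 V) := {e | ∃ a b, e = s(a, b) ∧ T.rel a b ∧ T'.rel b a}
  obtain ⟨Xs, hXs⟩ := T.exists_invSeq_rel_eq_ite D.toFinite.toFinset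
  refine ⟨Xs, ext fun a b => ?_⟩
  simp only [hXs, Set.Finite.mem_toFinset]
  split_ifs with hD
  · obtain ⟨a', b', hab, h, h'⟩ := hD
    rcases Sym2.eq_iff.mp hab with ⟨rfl, rfl⟩ | ⟨rfl, rfl⟩
    · exact iff_of_false (T.asymm _ _ h) (T'.asymm _ _ h')
    · exact iff_of_true h h'
  · rcases eq_or_ne a b with rfl | hab
    · exact iff_of_false (T.irrefl a) (T'.irrefl a)
    constructor
    · intro h
      exact (T'.total a b hab).resolve_right fun h' => hD ⟨a, b, rfl, h, h'⟩
    · intro h'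
      exact (T.total a b hab).resolve_right fun h => hD ⟨b, a, Sym2.eq_swap, h, h'⟩

theorem exists_isAcyclic (V : Type*) : ∃ T : Tournament V, T.IsAcyclic :=
  letI := IsWellOrder.linearOrder (WellOrderingRel (α := V))
  ⟨⟨(· < ·), lt_irrefl, fun _ _ => lt_or_gt_of_ne, fun _ _ => lt_asymm⟩, fun _ _ _ => lt_trans⟩

theorem isAcyclic_of_not_cycle {T : Tournament V}
    (h : ∀ a b c, T.rel a b → T.rel b c → ¬ T.rel c a) : T.IsAcyclic := by
  intro a b c hab hbc
  rcases eq_or_ne a c with rfl | hac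
  · exact absurd hbc (T.asymm a b hab)
  · exact (T.total a c hac).resolve_right (h a b c hab hbc)

theorem exists_forall_rel_of_isAcyclic [Finite V] {T : Tournament V} (hT : T.IsAcyclic)
    {S : Set V} (hS : S.Nonempty) : ∃ x ∈ S, ∀ z ∈ S, z ≠ x → T.rel z x := by
  have : IsTrans V (flip T.rel) := ⟨fun a b c hab hbc => hT c b a hbc hab⟩
  have : Std.Irrefl (flip T.rel) := ⟨T.irrefl⟩
  obtain ⟨x, hx, hmax⟩ := (Finite.wellFounded_of_trans_of_irrefl (flip T.rel)).has_min S hS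
  exact ⟨x, hx, fun z hz hzx => (T.total z x hzx).resolve_right (hmax z hz)⟩

theorem index_le_length {T : Tournament V} {Xs : List (Set V)} (h : (T.invSeq Xs).IsAcyclic) :
    T.index ≤ Xs.length :=
  Nat.sInf_le ⟨Xs, rfl, h⟩

theorem exists_invSeq_isAcyclic_length_eq_index [Finite V] (T : Tournament V) :
    ∃ Xs : List (Set V), Xs.length = T.index ∧ (T.invSeq Xs).IsAcyclic := by
  obtain ⟨T', hT'⟩ := exists_isAcyclic V
  obtain ⟨Xs, rfl⟩ := exists_invSeq_eq T T'
  have hmem : T.index ∈ {m | ∃ Ys : List (Set V), Ys.length = m ∧ (T.invSeq Ys).IsAcyclic} :=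
    Nat.sInf_mem ⟨Xs.length, Xs, rfl, hT'⟩
  exact hmem

theorem IsInterval.rel_iff_rel_left {T : Tournament V} {X : Set V} (hX : T.IsInterval X)
    {a b z : V} (ha : a ∈ X) (hb : b ∈ X) (hz : z ∉ X) : T.rel a z ↔ T.rel b z := by
  rcases hX z hz with h | h
  · exact iff_of_true (h a ha) (h b hb)
  · exact iff_of_false (T.asymm _ _ (h a ha)) (T.asymm _ _ (h b hb))

theorem IsInterval.rel_iff_rel_right {T : Tournament V} {X : Set V} (hX : T.IsInterval X)
    {a b z : V} (ha : a ∈ X) (hb : b ∈ X) (hz : z ∉ X) : T.rel z a ↔ T.rel z b := by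
  rcases hX z hz with h | h
  · exact iff_of_false (T.asymm _ _ (h a ha)) (T.asymm _ _ (h b hb))
  · exact iff_of_true (h a ha) (h b hb)

theorem IsInterval.image_val {T : Tournament V} {X : Set V} (hX : T.IsInterval X)
    {Y : Set X} (hY : (T.restrict X).IsInterval Y) : T.IsInterval (Subtype.val '' Y) := by
  rintro z hz
  by_cases hzX : z ∈ X
  · have hzY : ⟨z, hzX⟩ ∉ Y := fun h => hz ⟨_, h, rfl⟩
    rcases hY ⟨z, hzX⟩ hzY with h | h
    · exact Or.inl (by rintro _ ⟨v, hv, rfl⟩; exact h v hv)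
    · exact Or.inr (by rintro _ ⟨v, hv, rfl⟩; exact h v hv)
  · rcases hX z hzX with h | h
    · exact Or.inl (by rintro _ ⟨v, -, rfl⟩; exact h v v.2)
    · exact Or.inr (by rintro _ ⟨v, -, rfl⟩; exact h v v.2)

theorem IsInterval.inv {T : Tournament V} {X S : Set V} (hX : T.IsInterval X)
    (hS : ∀ a ∈ X, ∀ b ∈ X, a ∈ S → b ∈ S) : (T.inv S).IsInterval X := by
  intro z hz
  simp only [rel_inv]
  by_cases hXS : (∃ a ∈ X, a ∈ S) ∧ z ∈ S
  · obtain ⟨⟨a, ha, haS⟩, hzS⟩ := hXS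
    have hXS : ∀ b ∈ X, b ∈ S := fun b hb => hS a ha b hb haS
    rcases hX z hz with h | h
    · exact Or.inr fun v hv => Or.inl ⟨hzS, hXS v hv, h v hv⟩
    · exact Or.inl fun v hv => Or.inl ⟨hXS v hv, hzS, h v hv⟩
  · have hunchanged : ∀ v ∈ X, v ∉ S ∨ z ∉ S := fun v hv => by
      by_contra! h'
      exact hXS ⟨⟨v, hv, h'.1⟩, h'.2⟩
    rcases hX z hz with h | h
    · exact Or.inl fun v hv => Or.inr ⟨hunchanged v hv, h v hv⟩
    · exact Or.inr fun v hv => Or.inr ⟨(hunchanged v hv).symm, h v hv⟩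

theorem IsInterval.invSeq {T : Tournament V} {X : Set V} (hX : T.IsInterval X)
    {Xs : List (Set V)} (hXs : ∀ S ∈ Xs, ∀ a ∈ X, ∀ b ∈ X, a ∈ S → b ∈ S) :
    (T.invSeq Xs).IsInterval X := by
  induction Xs generalizing T with
  | nil => exact hX
  | cons S Xs ih =>
    exact ih (hX.inv (hXs S List.mem_cons_self)) fun S' hS' => hXs S' (List.mem_cons_of_mem S hS')

theorem IsAcyclic.exists_isInterval_pair [Finite V] [Nontrivial V] {T : Tournament V}
    (hT : T.IsAcyclic) :
    ∃ x y, y ≠ x ∧ T.IsInterval {x, y} := by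
  obtain ⟨x, -, hx⟩ := exists_forall_rel_of_isAcyclic hT Set.univ_nonempty
  obtain ⟨y, hyx, hy⟩ := exists_forall_rel_of_isAcyclic hT (exists_ne x)
  refine ⟨x, y, hyx, fun z hz => Or.inr ?_⟩
  simp only [Set.mem_insert_iff, Set.mem_singleton_iff, not_or] at hz
  rintro v (rfl | rfl)
  · exact hx z trivial hz.1
  · exact hy z hz.1 hz.2

theorem isAcyclic_of_isInterval_pair {T : Tournament V} {x y : V} (hyx : y ≠ x)
    (hI : T.IsInterval {x, y}) (hT : (T.erase x).IsAcyclic) : T.IsAcyclic := by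
  have hx : x ∈ ({x, y} : Set V) := Set.mem_insert x {y}
  have hy : y ∈ ({x, y} : Set V) := Set.mem_insert_of_mem x rfl
  have hout : ∀ {z}, z ≠ x → z ≠ y → z ∉ ({x, y} : Set V) := by simp_all
  have no_cycle_through_x : ∀ b c, T.rel x b → T.rel b c → ¬ T.rel c x := by
    intro b c hxb hbc hcx
    have hbx : b ≠ x := fun h => T.irrefl x (h ▸ hxb)
    have hcx' : c ≠ x := fun h => T.asymm x b hxb (h ▸ hbc)
    by_cases hby : b = y
    · rw [hby] at hbc
      have hcy : c ≠ y := fun h => T.irrefl y (h ▸ hbc)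
      exact T.asymm _ _ hbc ((hI.rel_iff_rel_right hx hy (hout hcx' hcy)).mp hcx)
    by_cases hcy : c = y
    · rw [hcy] at hbc
      exact T.asymm _ _ hbc ((hI.rel_iff_rel_left hx hy (hout hbx hby)).mp hxb)
    have hyb := (hI.rel_iff_rel_left hx hy (hout hbx hby)).mp hxb
    have hcy' := (hI.rel_iff_rel_right hx hy (hout hcx' hcy)).mp hcx
    exact T.asymm _ _ hcy' (hT ⟨y, hyx⟩ ⟨b, hbx⟩ ⟨c, hcx'⟩ hyb hbc)
  refine isAcyclic_of_not_cycle fun a b c hab hbc hca => ?_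
  rcases eq_or_ne a x with rfl | hax
  · exact no_cycle_through_x b c hab hbc hca
  rcases eq_or_ne b x with rfl | hbx
  · exact no_cycle_through_x c a hbc hca hab
  rcases eq_or_ne c x with rfl | hcx
  · exact no_cycle_through_x a b hca hab hbc
  exact T.asymm _ _ hca (hT ⟨a, hax⟩ ⟨b, hbx⟩ ⟨c, hcx⟩ hab hbc)

def retractTo [DecidableEq V] {x y : V} (hyx : y ≠ x) (v : V) : {z : V // z ≠ x} :=
  if h : v = x then ⟨y, hyx⟩ else ⟨v, h⟩

theorem retractTo_val [DecidableEq V] {x y : V} (hyx : y ≠ x) (z : {z : V // z ≠ x}) :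
    retractTo hyx z = z :=
  dif_neg z.2

theorem retractTo_of_mem_pair [DecidableEq V] {x y : V} (hyx : y ≠ x) {v : V}
    (hv : v ∈ ({x, y} : Set V)) : retractTo hyx v = ⟨y, hyx⟩ := by
  rcases hv with rfl | rfl
  · exact dif_pos rfl
  · exact retractTo_val hyx ⟨v, hyx⟩

theorem IsInterval.index_le_index_erase [Finite V] {T : Tournament V} {x y : V}
    (hI : T.IsInterval {x, y}) (hyx : y ≠ x) : T.index ≤ (T.erase x).index := by
  classical
  obtain ⟨Xs, hlen, hXs⟩ := (T.erase x).exists_invSeq_isAcyclic_length_eq_index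
  let Ys := Xs.map (retractTo hyx ⁻¹' ·)
  have hYs : (T.invSeq Ys).erase x = (T.erase x).invSeq Xs := by
    have hret : ∀ S : Set {z : V // z ≠ x}, Subtype.val ⁻¹' (retractTo hyx ⁻¹' S) = S :=
      fun S => by ext z; simp [retractTo_val]
    simp only [erase_invSeq, Ys, List.map_map, Function.comp_def, hret, List.map_id']
  have hIYs : (T.invSeq Ys).IsInterval {x, y} := hI.invSeq fun S hS a ha b hb => by
    obtain ⟨S, -, rfl⟩ := List.mem_map.mp hS
    simp [Set.mem_preimage, retractTo_of_mem_pair hyx ha, retractTo_of_mem_pair hyx hb]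
  calc T.index ≤ Ys.length := index_le_length (isAcyclic_of_isInterval_pair hyx hIYs (hYs ▸ hXs))
    _ = (T.erase x).index := by simp [Ys, hlen]

end Tournament

/-- a bound of the class of finite tournaments of index at most `m`
(a finite tournament `T` with `i(T) > m` and `i(T − x) ≤ m` for every vertex `x`)
is acyclically indecomposable: every acyclic interval of `T` has at most one
element. -/
theorem bound_is_acyclically_indecomposable {V : Type*} [Fintype V] (m : ℕ)
    (T : Tournament V) (h1 : m < T.index) (h2 : ∀ x : V, (T.erase x).index ≤ m) :
    ∀ X : Set V, T.IsInterval X → (T.restrict X).IsAcyclic → X.Subsingleton := by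
  intro X hX hacyc
  by_contra hns
  have : Nontrivial X := Set.nontrivial_coe_sort.mpr (Set.not_subsingleton_iff.mp hns)
  obtain ⟨x, y, hyx, hxy⟩ := hacyc.exists_isInterval_pair
  have hI : T.IsInterval {(x : V), (y : V)} := Set.image_pair Subtype.val x y ▸ hX.image_val hxy
  have hle := hI.index_le_index_erase (Subtype.coe_ne_coe.mpr hyx)
  exact (h1.trans_le hle).not_ge (h2 x)
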